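/- Square Root Bound: Let D₀, D₁ be a pair of odd-like duadic codes of length n over F_q arising from a splitting {S₀,S₁,a}. Then the minimum Hamming weight d_o among odd-like codewords is the same in D₀ and D₁, and d_o² ≥ n. -/
import Mathlib

/-- The cyclic code of length `n` over `F` with defining set `T ⊆ ℤ/nℤ`, relative to a
fixed primitive `n`-th root of unity `α` in an extension field `E` (embedding `f`). -/
def cyclicCode (n : ℕ) [NeZero n] {F E : Type*} [Field F] [Field E]
    (f : F →+* E) (α : E) (T : Set (ZMod n)) : Set (ZMod n → F) :=
  {c | ∀ j ∈ T, ∑ i : ZMod n, f (c i) * α ^ (j * i).val = 0}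

/-- The minimum Hamming weight among odd-like codewords (those with `∑ᵢ cᵢ ≠ 0`) of the
cyclic code with defining set `T`. -/
noncomputable def minOddWeight (n : ℕ) [NeZero n] {F E : Type*} [Field F] [DecidableEq F]
    [Field E] (f : F →+* E) (α : E) (T : Set (ZMod n)) : ℕ :=
  sInf {w | ∃ c ∈ cyclicCode n f α T, (∑ i : ZMod n, c i) ≠ 0 ∧ hammingNorm c = w}

section Aux

variable (n : ℕ) [NeZero n] {F E : Type*} [Field F] [Field E] (α : E)

lemma chi_add (hα : orderOf α = n) (x y : ZMod n) :
    α ^ (x + y).val = α ^ x.val * α ^ y.val := by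
  subst hα
  rw [ZMod.val_add, ← pow_add, pow_mod_orderOf]

lemma sum_val_eq {M : Type*} [AddCommMonoid M] (g : ℕ → M) :
    ∑ j : ZMod n, g (ZMod.val j) = ∑ k ∈ Finset.range n, g k := by
  refine Finset.sum_nbij' (fun j => ZMod.val j) (fun k => (k : ZMod n)) ?_ ?_ ?_ ?_ ?_
  · exact fun j _ => Finset.mem_range.2 (ZMod.val_lt j)
  · exact fun k _ => Finset.mem_univ _
  · exact fun j _ => ZMod.natCast_rightInverse j
  · exact fun k hk => ZMod.val_cast_of_lt (Finset.mem_range.1 hk)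
  · exact fun j _ => rfl

lemma sum_chi (hα : orderOf α = n) (m : ZMod n) :
    ∑ j : ZMod n, α ^ (j * m).val = if m = 0 then (n : E) else 0 := by
  subst hα
  split_ifs with hm
  · subst hm; simp [ZMod.card]
  · have h1 : ∀ j : ZMod (orderOf α), α ^ (j * m).val = (α ^ m.val) ^ j.val := by
      intro j
      rw [← pow_mul, ZMod.val_mul, pow_mod_orderOf, mul_comm]
    simp_rw [h1]
    rw [sum_val_eq]
    have hβ1 : (α ^ m.val) ≠ 1 := by
      intro h
      have hdvd : orderOf α ∣ m.val := orderOf_dvd_of_pow_eq_one h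
      exact hm ((ZMod.val_eq_zero m).1 (Nat.eq_zero_of_dvd_of_lt hdvd (ZMod.val_lt m)))
    have hβn : (α ^ m.val) ^ orderOf α = 1 := by
      rw [← pow_mul, mul_comm, pow_mul, pow_orderOf_eq_one, one_pow]
    rw [geom_sum_eq hβ1, hβn, sub_self, zero_div]

variable (f : F →+* E)

/-- Multipliers map one cyclic code into another. -/
lemma mult_mem (a : (ZMod n)ˣ) (T T' : Set (ZMod n))
    (h : ∀ j ∈ T', ((a⁻¹ : (ZMod n)ˣ) : ZMod n) * j ∈ T) {c : ZMod n → F}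
    (hc : c ∈ cyclicCode n f α T) :
    (fun i => c ((a : ZMod n) * i)) ∈ cyclicCode n f α T' := by
  intro j hj
  have key : ∑ i : ZMod n, f (c ((a : ZMod n) * i)) * α ^ (j * i).val
      = ∑ i : ZMod n, f (c i) * α ^ ((((a⁻¹ : (ZMod n)ˣ) : ZMod n) * j) * i).val := by
    refine (Fintype.sum_equiv (Units.mulLeft a⁻¹) _ _ fun i => ?_).symm
    simp only [Units.mulLeft_apply]
    rw [Units.mul_inv_cancel_left]
    have h2 : (((a⁻¹ : (ZMod n)ˣ) : ZMod n) * j) * i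
        = j * (((a⁻¹ : (ZMod n)ˣ) : ZMod n) * i) := by ring
    rw [h2]
  rw [key]
  exact hc _ (h j hj)

lemma oddSet_subset [DecidableEq F] (a : (ZMod n)ˣ) (T T' : Set (ZMod n))
    (h : ∀ j ∈ T', ((a⁻¹ : (ZMod n)ˣ) : ZMod n) * j ∈ T) :
    {w | ∃ c ∈ cyclicCode n f α T, (∑ i : ZMod n, c i) ≠ 0 ∧ hammingNorm c = w} ⊆
      {w | ∃ c ∈ cyclicCode n f α T', (∑ i : ZMod n, c i) ≠ 0 ∧ hammingNorm c = w} := by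
  rintro w ⟨c, hc, hs, hw⟩
  refine ⟨fun i => c ((a : ZMod n) * i), mult_mem n α f a T T' h hc, ?_, ?_⟩
  · have h3 : ∑ i : ZMod n, c ((a : ZMod n) * i) = ∑ i : ZMod n, c i :=
      Fintype.sum_equiv (Units.mulLeft a) _ c fun x => rfl
    show ∑ i : ZMod n, c ((a : ZMod n) * i) ≠ 0
    rwa [h3]
  · rw [← hw]
    simp only [hammingNorm]
    exact Finset.card_equiv (Units.mulLeft a) fun i => by simp

end Aux

/-- Square Root Bound: for a pair `D₀, D₁` of odd-like duadic codes of length `n` over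
`F_q` arising from a splitting `{S₀, S₁, a}`, the minimum odd-like weights of `D₀` and
`D₁` coincide (call it `d_o`), and `d_o² ≥ n`. -/
theorem stmt_13 (n q : ℕ) [NeZero n] (hn : Odd n) {F E : Type*} [Field F] [Fintype F]
    [DecidableEq F] [Field E] (hcard : Fintype.card F = q) (hco : Nat.Coprime n q)
    (f : F →+* E) (α : E) (hα : orderOf α = n)
    (S₀ S₁ : Set (ZMod n)) (a : (ZMod n)ˣ)
    (hdisj : S₀ ∩ S₁ = ∅)
    (hunion : S₀ ∪ S₁ = {x : ZMod n | x ≠ 0})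
    (hc0 : (fun x => (q : ZMod n) * x) '' S₀ = S₀)
    (hc1 : (fun x => (q : ZMod n) * x) '' S₁ = S₁)
    (ha0 : (fun x => (a : ZMod n) * x) '' S₀ = S₁)
    (ha1 : (fun x => (a : ZMod n) * x) '' S₁ = S₀) :
    minOddWeight n f α S₀ = minOddWeight n f α S₁ ∧
      n ≤ (minOddWeight n f α S₀) ^ 2 := by
  have hprim : IsPrimitiveRoot α n := hα ▸ IsPrimitiveRoot.orderOf α
  have hnE : ((n : ℕ) : E) ≠ 0 := hprim.neZero'.out
  have hfinj : Function.Injective f := f.injective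
  have hfne : ∀ x : F, x ≠ 0 → f x ≠ 0 := fun x hx h => hx (hfinj (by rw [h, map_zero]))
  have hnF : ((n : ℕ) : F) ≠ 0 := by
    intro h
    have h1 : ringChar F ∣ n := ringChar.dvd h
    have h2 : (q : F) = 0 := by rw [← hcard]; exact FiniteField.cast_card_eq_zero F
    have h3 : ringChar F ∣ q := ringChar.dvd h2
    have h4 : ringChar F ∣ Nat.gcd n q := Nat.dvd_gcd h1 h3
    rw [hco] at h4
    exact CharP.ringChar_ne_one (Nat.dvd_one.mp h4)
  have hS₀ne : ∀ j ∈ S₀, j ≠ 0 := fun j hj =>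
    (hunion ▸ (Set.subset_union_left : S₀ ⊆ S₀ ∪ S₁)) hj
  -- multiplier conditions
  have hmul01 : ∀ j ∈ S₁, ((a⁻¹ : (ZMod n)ˣ) : ZMod n) * j ∈ S₀ := by
    intro j hj
    rw [← ha0] at hj
    obtain ⟨x, hx, rfl⟩ := hj
    rwa [Units.inv_mul_cancel_left]
  have hmul10 : ∀ j ∈ S₀, ((a⁻¹ : (ZMod n)ˣ) : ZMod n) * j ∈ S₁ := by
    intro j hj
    rw [← ha1] at hj
    obtain ⟨x, hx, rfl⟩ := hj
    rwa [Units.inv_mul_cancel_left]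
  have hWeq : {w | ∃ c ∈ cyclicCode n f α S₀, (∑ i : ZMod n, c i) ≠ 0 ∧ hammingNorm c = w} =
      {w | ∃ c ∈ cyclicCode n f α S₁, (∑ i : ZMod n, c i) ≠ 0 ∧ hammingNorm c = w} :=
    Set.Subset.antisymm (oddSet_subset n α f a S₀ S₁ hmul01)
      (oddSet_subset n α f a S₁ S₀ hmul10)
  -- nonemptiness via the all-ones word
  have hone : (fun _ : ZMod n => (1 : F)) ∈ cyclicCode n f α S₀ := by
    intro j hj
    simp only [map_one, one_mul]
    simp_rw [mul_comm j]
    rw [sum_chi n α hα j, if_neg (hS₀ne j hj)]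
  have honesum : (∑ _i : ZMod n, (1 : F)) ≠ 0 := by
    simpa [ZMod.card] using hnF
  have hW₀ne : {w | ∃ c ∈ cyclicCode n f α S₀,
      (∑ i : ZMod n, c i) ≠ 0 ∧ hammingNorm c = w}.Nonempty :=
    ⟨_, _, hone, honesum, rfl⟩
  have hd₀mem := Nat.sInf_mem hW₀ne
  obtain ⟨c, hc, hcs, hcw⟩ := hd₀mem
  set d₀ := sInf {w | ∃ c ∈ cyclicCode n f α S₀,
      (∑ i : ZMod n, c i) ≠ 0 ∧ hammingNorm c = w} with hd₀
  -- the multiplied codeword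
  set cb : ZMod n → F := fun i => c ((a : ZMod n) * i) with hcbdef
  have hcbmem : cb ∈ cyclicCode n f α S₁ := mult_mem n α f a S₀ S₁ hmul01 hc
  have hcbsum : ∑ i : ZMod n, cb i = ∑ i : ZMod n, c i :=
    Fintype.sum_equiv (Units.mulLeft a) _ c fun x => rfl
  have hcbw : hammingNorm cb = d₀ := by
    rw [← hcw]
    simp only [hammingNorm]
    exact Finset.card_equiv (Units.mulLeft a) fun i => by simp [hcbdef]
  -- convolution
  set g : ZMod n → F := fun k => ∑ i : ZMod n, c i * cb (k - i) with hgdef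
  have hconv : ∀ j : ZMod n, ∑ k : ZMod n, f (g k) * α ^ (j * k).val
      = (∑ i : ZMod n, f (c i) * α ^ (j * i).val)
        * (∑ l : ZMod n, f (cb l) * α ^ (j * l).val) := by
    intro j
    rw [Finset.sum_mul_sum]
    simp only [hgdef, map_sum, map_mul, Finset.sum_mul]
    rw [Finset.sum_comm]
    refine Finset.sum_congr rfl fun i _ => ?_
    refine (Fintype.sum_equiv (Equiv.addLeft i) _ _ fun l => ?_).symm
    simp only [Equiv.coe_addLeft]
    rw [add_sub_cancel_left, mul_add j, chi_add n α hα]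
    ring
  have htc0 : ∑ i : ZMod n, f (c i) * α ^ ((0 : ZMod n) * i).val = f (∑ i : ZMod n, c i) := by
    simp [map_sum]
  have htcb0 : ∑ i : ZMod n, f (cb i) * α ^ ((0 : ZMod n) * i).val = f (∑ i : ZMod n, cb i) := by
    simp [map_sum]
  have hs : f (∑ i : ZMod n, c i) * f (∑ i : ZMod n, cb i) ≠ 0 :=
    mul_ne_zero (hfne _ hcs) (hfne _ (hcbsum ▸ hcs))
  have hgz : ∀ j : ZMod n, j ≠ 0 → ∑ k : ZMod n, f (g k) * α ^ (j * k).val = 0 := by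
    intro j hj
    have hjmem : j ∈ S₀ ∪ S₁ := by rw [hunion]; exact hj
    rw [hconv j]
    rcases hjmem with h | h
    · rw [hc j h, zero_mul]
    · rw [hcbmem j h, mul_zero]
  -- Fourier inversion
  have hinv : ∀ k₀ : ZMod n, f (g k₀) * (n : E)
      = f (∑ i : ZMod n, c i) * f (∑ i : ZMod n, cb i) := by
    intro k₀
    have hA : ∑ j : ZMod n, (∑ k : ZMod n, f (g k) * α ^ (j * k).val) * α ^ (j * (-k₀)).val
        = f (∑ i : ZMod n, c i) * f (∑ i : ZMod n, cb i) := by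
      rw [Finset.sum_eq_single 0]
      · rw [hconv 0, htc0, htcb0]; simp
      · intro j _ hj
        rw [hgz j hj, zero_mul]
      · intro h; exact absurd (Finset.mem_univ 0) h
    have hB : ∑ j : ZMod n, (∑ k : ZMod n, f (g k) * α ^ (j * k).val) * α ^ (j * (-k₀)).val
        = f (g k₀) * (n : E) := by
      simp only [Finset.sum_mul]
      rw [Finset.sum_comm]
      have hkey : ∀ k : ZMod n,
          ∑ j : ZMod n, f (g k) * α ^ (j * k).val * α ^ (j * (-k₀)).val
          = f (g k) * (if k - k₀ = 0 then (n : E) else 0) := by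
        intro k
        simp_rw [mul_assoc, ← chi_add n α hα]
        have h2 : ∀ j : ZMod n, j * k + j * (-k₀) = j * (k - k₀) := fun j => by ring
        simp_rw [h2]
        rw [← Finset.mul_sum, sum_chi n α hα]
      simp_rw [hkey]
      rw [Finset.sum_eq_single k₀]
      · simp
      · intro k _ hk
        rw [if_neg (sub_ne_zero.2 hk), mul_zero]
      · intro h; exact absurd (Finset.mem_univ k₀) h
    rw [← hB, hA]
  have hgk : ∀ k : ZMod n, g k ≠ 0 := by
    intro k hk
    have h := hinv k
    rw [hk, map_zero, zero_mul] at h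
    exact hs h.symm
  -- counting argument
  have hns : n ≤ d₀ * d₀ := by
    have hsub : (Finset.univ : Finset (ZMod n)) ⊆
        Finset.image (fun p : ZMod n × ZMod n => p.1 + p.2)
          (({i | c i ≠ 0} : Finset (ZMod n)) ×ˢ ({i | cb i ≠ 0} : Finset (ZMod n))) := by
      intro k _
      have hex : ∃ i, c i * cb (k - i) ≠ 0 := by
        by_contra h
        push_neg at h
        exact hgk k (Finset.sum_eq_zero fun i _ => h i)
      obtain ⟨i, hi⟩ := hex
      refine Finset.mem_image.2 ⟨(i, k - i), ?_, by simp⟩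
      simp only [Finset.mem_product, Finset.mem_filter, Finset.mem_univ, true_and]
      exact ⟨left_ne_zero_of_mul hi, right_ne_zero_of_mul hi⟩
    calc n = (Finset.univ : Finset (ZMod n)).card := by simp [ZMod.card]
      _ ≤ _ := Finset.card_le_card hsub
      _ ≤ _ := Finset.card_image_le
      _ = d₀ * d₀ := by
          rw [Finset.card_product]
          rw [show (({i | c i ≠ 0} : Finset (ZMod n)).card) = hammingNorm c from rfl,
            show (({i | cb i ≠ 0} : Finset (ZMod n)).card) = hammingNorm cb from rfl, hcw, hcbw]
  constructor
  · show sInf _ = sInf _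
    rw [hWeq]
  · show n ≤ d₀ ^ 2
    rwa [pow_two]
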